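/- arXiv:1905.10406 — 2 statements merged into one kernel-verified Lean document; each statement's English description precedes it below -/
import Mathlib

section
/- Let m and n be positive integers with m < n and m even, and let α be any real number. Then the sum over k from 1 to n of cos(α - (k-1)·2π/n)^m equals n · (m choose m/2) / 2^m. -/
/-!
Write `cos z ^ m = 2⁻ᵐ (e^{iz} + e^{-iz})^m` and expand binomially. Summed over the `n` equally
spaced angles, the frequency `2j - m` contributes a geometric sum of an `n`-th root of unity,
which vanishes unless `n ∣ 2j - m`; as `|2j - m| ≤ m < n`, only the central term `j = m / 2`
survives, contributing `n * m.choose (m / 2)`.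
-/

open Real Finset

namespace Complex

theorem cos_pow_eq_sum_exp (m : ℕ) (z : ℂ) :
    cos z ^ m = (∑ j ∈ range (m + 1), m.choose j * exp ((2 * j - m) * z * I)) / 2 ^ m := by
  rw [cos, div_pow, add_pow]
  congr 1
  refine sum_congr rfl fun j hj => ?_
  have hjm : j ≤ m := Nat.lt_succ_iff.1 (mem_range.1 hj)
  rw [← exp_nat_mul, ← exp_nat_mul, ← exp_add]
  push_cast [Nat.cast_sub hjm]
  ring_nf

theorem exp_int_mul_two_pi_div_mul_I_ne_one {n : ℕ} (hn : n ≠ 0) {t : ℤ} (ht : ¬ (n : ℤ) ∣ t) :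
    exp (t * (2 * π / n) * I) ≠ 1 := by
  rw [show (t : ℂ) * (2 * π / n) * I = t * (2 * π * I / n) by ring, exp_int_mul,
    Ne, (isPrimitiveRoot_exp n hn).zpow_eq_one_iff_dvd]
  exact ht

theorem sum_range_exp_int_mul_sub_eq_zero {n : ℕ} {t : ℤ} (ht : ¬ (n : ℤ) ∣ t) (θ : ℂ) :
    ∑ k ∈ range n, exp (t * (θ - k * (2 * π / n)) * I) = 0 := by
  rcases eq_or_ne n 0 with rfl | hn
  · exact sum_range_zero _
  set w := exp ((-t : ℤ) * (2 * π / n) * I)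
  have hw : w ^ n = 1 := by
    rw [← exp_nat_mul, ← exp_int_mul_two_pi_mul_I (-t)]
    congr 1
    field_simp
  have hw1 : w ≠ 1 := exp_int_mul_two_pi_div_mul_I_ne_one hn (by rwa [Int.dvd_neg])
  calc ∑ k ∈ range n, exp (t * (θ - k * (2 * π / n)) * I)
      = exp (t * θ * I) * ∑ k ∈ range n, w ^ k := by
        rw [mul_sum]
        refine sum_congr rfl fun k _ => ?_
        rw [← exp_nat_mul, ← exp_add]
        push_cast
        ring_nf
    _ = 0 := by rw [geom_sum_eq hw1, hw, sub_self, zero_div, mul_zero]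

theorem sum_range_cos_sub_pow_of_even {m n : ℕ} (hmn : m < n) (heven : Even m) (θ : ℂ) :
    ∑ k ∈ range n, cos (θ - k * (2 * π / n)) ^ m = n * m.choose (m / 2) / 2 ^ m := by
  simp_rw [cos_pow_eq_sum_exp, ← sum_div]
  rw [sum_comm]
  congr 1
  rw [sum_eq_single (m / 2)]
  · have hcenter : 2 * ((m / 2 : ℕ) : ℂ) - m = 0 := by
      rw [sub_eq_zero]; exact_mod_cast Nat.two_mul_div_two_of_even heven
    simp [hcenter, mul_comm]
  · intro j hjr hjm
    have hj : j ≤ m := Nat.lt_succ_iff.1 (mem_range.1 hjr)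
    have hndvd : ¬ (n : ℤ) ∣ (2 * j - m) := fun hdvd => by
      have := Int.eq_zero_of_dvd_of_natAbs_lt_natAbs hdvd (by omega)
      omega
    have hzero := sum_range_exp_int_mul_sub_eq_zero hndvd
    push_cast at hzero
    rw [← mul_sum, hzero, mul_zero]
  · exact fun h => absurd (mem_range.2 (by omega)) h

end Complex

theorem cos_even_pow_sum_general (m n : ℕ) (hmn : m < n) (heven : Even m) (α : ℝ) :
    ∑ k ∈ Finset.Icc 1 n, Real.cos (α - ((k : ℝ) - 1) * (2 * π / n)) ^ m
      = n * (m.choose (m / 2)) / 2 ^ m := by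
  rw [← Ico_add_one_right_eq_Icc, sum_Ico_eq_sum_range, add_tsub_cancel_right, ← Complex.ofReal_inj]
  push_cast
  simpa only [add_sub_cancel_left] using Complex.sum_range_cos_sub_pow_of_even hmn heven α

theorem cos_even_pow_sum (m n : ℕ) (hm : 0 < m) (hmn : m < n) (heven : Even m) (α : ℝ) :
    ∑ k ∈ Finset.Icc 1 n, Real.cos (α - ((k : ℝ) - 1) * (2 * π / n)) ^ m
      = n * (m.choose (m / 2)) / 2 ^ m :=
  cos_even_pow_sum_general m n hmn heven α
end

section
/- Let P_1, ..., P_5 be the vertices of a regular pentagon with center O and circumradius r, and let X be a point at distance ℓ from O. Then Σ_{i=1}^5 dist(X, P_i)^6 = 5(r^2 + ℓ^2)(r^4 + ℓ^4 + 8r^2ℓ^2). -/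
/-!
Put `a + b i = X - O` and `θₖ = 2kπ/5 + φ`. Then `dist X Pₖ ^ 6 = ((a - r cos θₖ)² + (b - r sin θₖ)²)³`
is a trigonometric polynomial of degree 3 in `θₖ`, and the harmonics `cos (m θₖ)`, `sin (m θₖ)`
with `0 < m < 5` sum to zero over `k < 5`, being real and imaginary parts of a geometric sum
of a nontrivial fifth root of unity. Only the constant term survives.
-/

open Real Finset

lemma sum_range_exp_nat_mul_eq_zero {n m : ℕ} (hm : ¬ n ∣ m) (φ : ℝ) :
    ∑ k ∈ range n, Complex.exp ((m * (2 * k * π / n + φ) : ℝ) * Complex.I) = 0 := by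
  obtain rfl | hn := eq_or_ne n 0
  · simp
  have hζ := Complex.isPrimitiveRoot_exp n hn
  set ζ := Complex.exp (2 * π * Complex.I / n)
  have hζm : ζ ^ m ≠ 1 := by rwa [Ne, hζ.pow_eq_one_iff_dvd]
  have hterm : ∀ k : ℕ, Complex.exp ((m * (2 * k * π / n + φ) : ℝ) * Complex.I)
      = Complex.exp ((m * φ : ℝ) * Complex.I) * (ζ ^ m) ^ k := by
    intro k
    rw [← pow_mul, ← Complex.exp_nat_mul, ← Complex.exp_add]
    congr 1
    push_cast
    ring
  rw [sum_congr rfl fun k _ => hterm k, ← mul_sum, geom_sum_eq hζm, ← pow_mul, mul_comm m,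
    pow_mul, hζ.pow_eq_one]
  simp

lemma sum_range_cos_nat_mul_eq_zero {n m : ℕ} (hm : ¬ n ∣ m) (φ : ℝ) :
    ∑ k ∈ range n, cos (m * (2 * k * π / n + φ)) = 0 := by
  simpa [← Complex.exp_ofReal_mul_I_re] using
    congrArg Complex.re (sum_range_exp_nat_mul_eq_zero hm φ)

lemma sum_range_sin_nat_mul_eq_zero {n m : ℕ} (hm : ¬ n ∣ m) (φ : ℝ) :
    ∑ k ∈ range n, sin (m * (2 * k * π / n + φ)) = 0 := by
  simpa [← Complex.exp_ofReal_mul_I_im] using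
    congrArg Complex.im (sum_range_exp_nat_mul_eq_zero hm φ)

lemma sq_sub_mul_cos_add_sq_sub_mul_sin_pow_three (a b r θ : ℝ) :
    ((a - r * cos θ) ^ 2 + (b - r * sin θ) ^ 2) ^ 3
      = (a ^ 2 + b ^ 2 + r ^ 2) ^ 3 + 6 * r ^ 2 * (a ^ 2 + b ^ 2 + r ^ 2) * (a ^ 2 + b ^ 2)
        - 6 * r * ((a ^ 2 + b ^ 2 + r ^ 2) ^ 2 + r ^ 2 * (a ^ 2 + b ^ 2)) * (a * cos θ + b * sin θ)
        + 6 * r ^ 2 * (a ^ 2 + b ^ 2 + r ^ 2)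
          * ((a ^ 2 - b ^ 2) * cos (2 * θ) + 2 * a * b * sin (2 * θ))
        - 2 * r ^ 3
          * ((a ^ 3 - 3 * a * b ^ 2) * cos (3 * θ) + (3 * a ^ 2 * b - b ^ 3) * sin (3 * θ)) := by
  have hq := cos_sq_add_sin_sq θ
  set t := a * cos θ + b * sin θ
  have hsq : (a - r * cos θ) ^ 2 + (b - r * sin θ) ^ 2 = a ^ 2 + b ^ 2 + r ^ 2 - 2 * r * t := by
    linear_combination r ^ 2 * hq
  have ht2 : t ^ 2 = (a ^ 2 + b ^ 2) / 2
      + ((a ^ 2 - b ^ 2) * cos (2 * θ) + 2 * a * b * sin (2 * θ)) / 2 := by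
    rw [cos_two_mul, sin_two_mul]
    linear_combination b ^ 2 * hq
  have ht3 : t ^ 3 = 3 / 4 * (a ^ 2 + b ^ 2) * t
      + ((a ^ 3 - 3 * a * b ^ 2) * cos (3 * θ) + (3 * a ^ 2 * b - b ^ 3) * sin (3 * θ)) / 4 := by
    rw [cos_three_mul, sin_three_mul]
    linear_combination 3 * a * b * (a * sin θ + b * cos θ) * hq
  rw [hsq]
  linear_combination 12 * (a ^ 2 + b ^ 2 + r ^ 2) * r ^ 2 * ht2 - 8 * r ^ 3 * ht3

lemma EuclideanSpace.dist_sq_eq_fin_two (x y : EuclideanSpace ℝ (Fin 2)) :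
    dist x y ^ 2 = (x 0 - y 0) ^ 2 + (x 1 - y 1) ^ 2 := by
  simp [EuclideanSpace.dist_sq_eq, Fin.sum_univ_two, Real.dist_eq, sq_abs]

theorem sum_pow6_dist_pentagon (O X : EuclideanSpace ℝ (Fin 2)) (r ℓ φ : ℝ)
    (P : ℕ → EuclideanSpace ℝ (Fin 2))
    (hP : ∀ k, P k = O + r • (WithLp.equiv 2 (Fin 2 → ℝ)).symm
      ![Real.cos (2 * k * π / 5 + φ), Real.sin (2 * k * π / 5 + φ)])
    (hX : dist X O = ℓ) :
    ∑ k ∈ Finset.range 5, dist X (P k) ^ 6 = 5 * (r ^ 2 + ℓ ^ 2) * (r ^ 4 + ℓ ^ 4 + 8 * r ^ 2 * ℓ ^ 2) := by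
  set a := X 0 - O 0
  set b := X 1 - O 1
  have hℓ : a ^ 2 + b ^ 2 = ℓ ^ 2 := by rw [← hX, EuclideanSpace.dist_sq_eq_fin_two]
  have hvertex : ∀ k : ℕ, dist X (P k) ^ 6 =
      ((a - r * cos (2 * k * π / 5 + φ)) ^ 2 + (b - r * sin (2 * k * π / 5 + φ)) ^ 2) ^ 3 := by
    intro k
    rw [show dist X (P k) ^ 6 = (dist X (P k) ^ 2) ^ 3 by ring, EuclideanSpace.dist_sq_eq_fin_two,
      hP k]
    simp only [a, b, PiLp.add_apply, PiLp.smul_apply, WithLp.equiv_symm_apply,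
      Matrix.cons_val_zero, Matrix.cons_val_one, smul_eq_mul]
    ring
  have hharmonic : ∀ m : ℕ, 0 < m → m < 5 →
      ∑ k ∈ range 5, cos (m * (2 * k * π / 5 + φ)) = 0 ∧
      ∑ k ∈ range 5, sin (m * (2 * k * π / 5 + φ)) = 0 := fun m h0 h5 => by
    have hm : ¬ 5 ∣ m := Nat.not_dvd_of_pos_of_lt h0 h5
    have hc := sum_range_cos_nat_mul_eq_zero hm φ
    have hs := sum_range_sin_nat_mul_eq_zero hm φ
    push_cast at hc hs
    exact ⟨hc, hs⟩
  obtain ⟨hc1, hs1⟩ := hharmonic 1 (by norm_num) (by norm_num)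
  obtain ⟨hc2, hs2⟩ := hharmonic 2 (by norm_num) (by norm_num)
  obtain ⟨hc3, hs3⟩ := hharmonic 3 (by norm_num) (by norm_num)
  simp only [Nat.cast_one, one_mul, Nat.cast_ofNat] at hc1 hs1 hc2 hs2 hc3 hs3
  simp only [hvertex, sq_sub_mul_cos_add_sq_sub_mul_sin_pow_three, sum_add_distrib,
    sum_sub_distrib, ← mul_sum, hc1, hs1, hc2, hs2, hc3, hs3, sum_const, card_range, nsmul_eq_mul]
  rw [show ℓ ^ 4 = (ℓ ^ 2) ^ 2 by ring, ← hℓ]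
  ring
end
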